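/- Widening of a critical droplet: let L ≥ 1 and m ≥ 1 be integers, let D = ({0,1} × [0,L−1]) ∩ ℤ² be a fully occupied 2 × L double segment, and let the initial set be A₀ = D ∪ Π(p). Then the ℙ_p-probability that ⟨A₀⟩ contains the widened rectangle ([−m, 1+m] × [0,L−1]) ∩ ℤ² is at least (1 − (1−p)^L)^{2m}. -/

import Mathlib

open MeasureTheory Set

abbrev Site : Type := ℤ × ℤ
abbrev Config : Type := Site → Bool

def ggN : Set Site := {(1,0), (2,0), (-1,0), (-2,0), (0,1), (0,-1)}

def ggT (A : Set Site) : Set Site :=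
  A ∪ {x : Site | 3 ≤ (((x + ·) '' ggN) ∩ A).ncard}

def ggClosure (A : Set Site) : Set Site := ⋃ n : ℕ, ggT^[n] A

def ggTRes (V A : Set Site) : Set Site :=
  A ∪ {x : Site | x ∈ V ∧ 3 ≤ (((x + ·) '' ggN) ∩ A).ncard}

def ggClosureRes (V A : Set Site) : Set Site := ⋃ n : ℕ, (ggTRes V)^[n] A

def InternallySpanned (V A₀ : Set Site) : Prop :=
  ggClosureRes V (A₀ ∩ V) = V

def occupied (ω : Config) : Set Site := {x | ω x = true}

def IsBernoulli (p : ℝ) (μ : Measure Config) : Prop :=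
  IsProbabilityMeasure μ ∧
  ProbabilityTheory.iIndepFun (fun (x : Site) (ω : Config) => ω x) μ ∧
  ∀ x : Site, μ {ω | ω x = true} = ENNReal.ofReal p

/-!
Once two adjacent full columns are in the closure, a column next to them that contains a single
occupied site in the row range fills up entirely: each site vertically adjacent to an already
occupied site of that column also sees the two sites beside it in the full columns, hence three
occupied neighbours. So the rectangle grows one column at a time, to the right and to the left,
as long as each new column contains an occupied site. For Bernoulli sites these 2m column events
are independent, each of probability 1 - (1 - p)^L.
-/

lemma ggN_finite : ggN.Finite := by
  simp [ggN]

lemma subset_ggT (A : Set Site) : A ⊆ ggT A := subset_union_left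

lemma monotone_ggT_iterate (A : Set Site) : Monotone (fun n => ggT^[n] A) :=
  monotone_nat_of_le_succ fun n => by
    simpa only [Function.iterate_succ_apply'] using subset_ggT (ggT^[n] A)

lemma subset_ggClosure (A : Set Site) : A ⊆ ggClosure A :=
  subset_iUnion (fun n => ggT^[n] A) 0

lemma ggT_ggClosure_subset (A : Set Site) : ggT (ggClosure A) ⊆ ggClosure A := by
  rintro x (hx | hx)
  · exact hx
  have hfin : ((x + ·) '' ggN ∩ ggClosure A).Finite := (ggN_finite.image _).inter_of_left _
  obtain ⟨n, hn⟩ :=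
    (monotone_ggT_iterate A).directed_le.exists_mem_subset_of_finset_subset_biUnion
      (s := hfin.toFinset) (by rw [hfin.coe_toFinset]; exact inter_subset_right)
  refine mem_iUnion.mpr ⟨n + 1, ?_⟩
  rw [Function.iterate_succ_apply']
  refine Or.inr (hx.trans (ncard_le_ncard ?_ ((ggN_finite.image _).inter_of_left _)))
  exact subset_inter inter_subset_left (by simpa using hn)

lemma mem_ggClosure_of_three {A : Set Site} {x u v w : Site}
    (hu : u ∈ ggN) (hv : v ∈ ggN) (hw : w ∈ ggN) (huv : u ≠ v) (huw : u ≠ w) (hvw : v ≠ w)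
    (hxu : x + u ∈ ggClosure A) (hxv : x + v ∈ ggClosure A) (hxw : x + w ∈ ggClosure A) :
    x ∈ ggClosure A := by
  refine ggT_ggClosure_subset A (Or.inr ?_)
  calc 3 = ({x + u, x + v, x + w} : Set Site).ncard :=
        (ncard_eq_three.mpr ⟨_, _, _, by simpa, by simpa, by simpa, rfl⟩).symm
    _ ≤ _ := by
      refine ncard_le_ncard ?_ ((ggN_finite.image _).inter_of_left _)
      rintro _ (rfl | rfl | rfl)
      exacts [⟨mem_image_of_mem _ hu, hxu⟩, ⟨mem_image_of_mem _ hv, hxv⟩,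
        ⟨mem_image_of_mem _ hw, hxw⟩]

lemma mem_ggClosure_of_horizontal_pair {A : Set Site} {x : Site} {s t : ℤ}
    (hs : s = 1 ∨ s = -1) (ht : t = 1 ∨ t = -1)
    (h₁ : x + (s, 0) ∈ ggClosure A) (h₂ : x + (2 * s, 0) ∈ ggClosure A)
    (h₃ : x + (0, t) ∈ ggClosure A) : x ∈ ggClosure A := by
  refine mem_ggClosure_of_three ?_ ?_ ?_ ?_ ?_ ?_ h₁ h₂ h₃ <;>
    rcases hs with rfl | rfl <;> rcases ht with rfl | rfl <;> simp [ggN]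

lemma column_subset_ggClosure {A : Set Site} {a b d s y₀ : ℤ} (hs : s = 1 ∨ s = -1)
    (h₁ : {d - s} ×ˢ Icc a b ⊆ ggClosure A) (h₂ : {d - 2 * s} ×ˢ Icc a b ⊆ ggClosure A)
    (hy₀ : y₀ ∈ Icc a b) (hseed : (d, y₀) ∈ ggClosure A) :
    {d} ×ˢ Icc a b ⊆ ggClosure A := by
  have step : ∀ y t : ℤ, t = 1 ∨ t = -1 → y + t ∈ Icc a b →
      (d, y) ∈ ggClosure A → (d, y + t) ∈ ggClosure A := by
    intro y t ht hyt hy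
    refine mem_ggClosure_of_horizontal_pair (s := -s) (t := -t) (by omega) (by omega) ?_ ?_ ?_
    · simpa [← sub_eq_add_neg] using h₁ (mk_mem_prod (mem_singleton _) hyt)
    · simpa [← sub_eq_add_neg] using h₂ (mk_mem_prod (mem_singleton _) hyt)
    · simpa using hy
  suffices ∀ y ∈ Icc a b, (d, y) ∈ ggClosure A by
    rintro ⟨c, y⟩ ⟨hc, hy⟩
    obtain rfl : c = d := hc
    exact this y hy
  intro y hy
  rcases le_total y₀ y with h | h
  · induction y, h using Int.leInduction with
    | base => exact hseed
    | succ n hn ih =>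
      exact step n 1 (Or.inl rfl) hy (ih ⟨hy₀.1.trans hn, by linarith [hy.2]⟩)
  · induction y, h using Int.leInductionDown with
    | base => exact hseed
    | pred n hn ih =>
      simpa [← sub_eq_add_neg] using
        step n (-1) (Or.inr rfl) (by simpa [← sub_eq_add_neg] using hy)
          (ih ⟨by linarith [hy.1], hn.trans hy₀.2⟩)

lemma columns_subset_ggClosure {A : Set Site} {a b c s : ℤ} {k : ℕ} (hs : s = 1 ∨ s = -1)
    (h₀ : {c} ×ˢ Icc a b ⊆ ggClosure A) (h₁ : {c + s} ×ˢ Icc a b ⊆ ggClosure A)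
    (hseed : ∀ j : ℕ, 2 ≤ j → j ≤ k → ∃ y ∈ Icc a b, (c + j * s, y) ∈ A) :
    ∀ j : ℕ, j ≤ k → {c + j * s} ×ˢ Icc a b ⊆ ggClosure A := by
  intro j
  induction j using Nat.twoStepInduction with
  | zero => exact fun _ => by simpa using h₀
  | one => exact fun _ => by simpa using h₁
  | more n ih₀ ih₁ =>
    intro hn
    obtain ⟨y, hy, hA⟩ := hseed (n + 2) (by omega) hn
    refine column_subset_ggClosure hs ?_ ?_ hy (subset_ggClosure A hA)
    · convert ih₁ (by omega) using 3; push_cast; ring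
    · convert ih₀ (by omega) using 3; push_cast; ring

lemma widened_rectangle_subset_ggClosure {A : Set Site} {a b : ℤ} (m : ℕ)
    (hD : ({0, 1} : Set ℤ) ×ˢ Icc a b ⊆ A)
    (hseed : ∀ c ∈ Icc (-(m : ℤ)) (1 + m) \ {0, 1}, ∃ y ∈ Icc a b, (c, y) ∈ A) :
    Icc (-(m : ℤ)) (1 + m) ×ˢ Icc a b ⊆ ggClosure A := by
  have hcol : ∀ c ∈ ({0, 1} : Set ℤ), {c} ×ˢ Icc a b ⊆ ggClosure A := fun c hc =>
    ((prod_mono (singleton_subset_iff.mpr hc) le_rfl).trans hD).trans (subset_ggClosure A)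
  rintro ⟨x, y⟩ ⟨⟨hx₁, hx₂⟩, hy⟩
  rcases le_total 0 x with h | h
  · obtain ⟨j, rfl⟩ := Int.eq_ofNat_of_zero_le h
    refine columns_subset_ggClosure (c := 0) (s := 1) (k := m + 1) (Or.inl rfl)
      (hcol 0 (by simp)) (by simpa using hcol 1 (by simp)) (fun i hi hik => ?_) j
      (by omega) (by simpa using hy)
    exact hseed _ ⟨⟨by omega, by omega⟩, by
      simp only [mem_insert_iff, mem_singleton_iff]; omega⟩
  · refine columns_subset_ggClosure (c := 1) (s := -1) (k := m + 1) (Or.inr rfl)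
      (hcol 1 (by simp)) (by simpa using hcol 0 (by simp)) (fun i hi hik => ?_) (1 - x).toNat
      (by omega) (mk_mem_prod (by simp only [mem_singleton_iff]; omega) hy)
    exact hseed _ ⟨⟨by omega, by omega⟩, by
      simp only [mem_insert_iff, mem_singleton_iff]; omega⟩

namespace ProbabilityTheory.iIndepFun

variable {Ω ι κ : Type*} [MeasurableSpace Ω] {μ : Measure Ω} {f : ι → Ω → Bool}

lemma measure_biInter_exists_eq_true (hf : iIndepFun f μ) (hmeas : ∀ i, Measurable (f i))
    (S : κ → Finset ι) (T : Finset κ) (hS : (T : Set κ).PairwiseDisjoint S) :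
    μ (⋂ k ∈ T, {ω | ∃ i ∈ S k, f i ω = true}) =
      ∏ k ∈ T, μ {ω | ∃ i ∈ S k, f i ω = true} := by
  classical
  have := hf.isProbabilityMeasure
  induction T using Finset.induction_on with
  | empty => simp
  | insert a T ha ih =>
    rw [Finset.coe_insert, pairwiseDisjoint_insert] at hS
    rw [Finset.set_biInter_insert, Finset.prod_insert ha, ← ih hS.1]
    have hdisj : Disjoint (S a) (T.biUnion S) :=
      (Finset.disjoint_biUnion_right _ _ _).mpr fun k hk =>
        hS.2 k hk (ne_of_mem_of_not_mem hk ha).symm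
    have hind := hf.indepFun_finset _ _ hdisj hmeas
    have hX : {ω | ∃ i ∈ S a, f i ω = true} =
        (fun ω (i : S a) => f i ω) ⁻¹' {v | ∃ i, v i = true} := by
      ext ω; simp
    have hY : ⋂ k ∈ T, {ω | ∃ i ∈ S k, f i ω = true} =
        (fun ω (i : T.biUnion S) => f i ω) ⁻¹'
          {v | ∀ k ∈ T, ∃ i ∈ S k, ∃ h : i ∈ T.biUnion S, v ⟨i, h⟩ = true} := by
      ext ω
      simp only [mem_iInter, mem_preimage]
      exact forall₂_congr fun k hk =>
        ⟨fun ⟨i, hi, h⟩ => ⟨i, hi, Finset.mem_biUnion.mpr ⟨k, hk, hi⟩, h⟩,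
          fun ⟨i, hi, _, h⟩ => ⟨i, hi, h⟩⟩
    rw [hX, hY]
    exact hind.measure_inter_preimage_eq_mul _ _ (toFinite _).measurableSet
      (toFinite _).measurableSet

end ProbabilityTheory.iIndepFun

lemma measurableSet_apply_eq (x : Site) (b : Bool) : MeasurableSet {ω : Config | ω x = b} :=
  measurableSet_eq_fun (measurable_pi_apply x) measurable_const

namespace IsBernoulli

variable {p : ℝ} {μ : Measure Config}

lemma measure_eq_false (hμ : IsBernoulli p μ) (hp₀ : 0 ≤ p) (x : Site) :
    μ {ω | ω x = false} = ENNReal.ofReal (1 - p) := by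
  have := hμ.1
  have hcompl : {ω : Config | ω x = false} = {ω | ω x = true}ᶜ := by ext ω; simp
  rw [hcompl, prob_compl_eq_one_sub (measurableSet_apply_eq x true), hμ.2.2 x,
    ENNReal.ofReal_sub _ hp₀, ENNReal.ofReal_one]

lemma measure_exists_eq_true (hμ : IsBernoulli p μ) (hp₀ : 0 ≤ p) (hp₁ : p ≤ 1)
    (S : Finset Site) :
    μ {ω | ∃ x ∈ S, ω x = true} = ENNReal.ofReal (1 - (1 - p) ^ S.card) := by
  have := hμ.1
  have hcompl :
      {ω : Config | ∃ x ∈ S, ω x = true} = (⋂ x ∈ S, {ω | ω x = false})ᶜ := by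
    ext ω; simp
  have hmeas : MeasurableSet (⋂ x ∈ S, {ω : Config | ω x = false}) :=
    S.measurableSet_biInter fun x _ => measurableSet_apply_eq x false
  rw [hcompl, prob_compl_eq_one_sub hmeas,
    hμ.2.1.meas_biInter (s := fun x => {ω | ω x = false})
      fun x _ => ⟨{false}, measurableSet_singleton _, rfl⟩,
    Finset.prod_congr rfl fun x _ => hμ.measure_eq_false hp₀ x, Finset.prod_const,
    ← ENNReal.ofReal_pow (by linarith), ← ENNReal.ofReal_one,
    ← ENNReal.ofReal_sub _ (pow_nonneg (by linarith) _)]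

end IsBernoulli

theorem gg_droplet_widening_general (p : ℝ) (hp : p ∈ Set.Ioo (0:ℝ) 1)
    (L m : ℕ)
    (μ : Measure Config) (hμ : IsBernoulli p μ) :
    ENNReal.ofReal ((1 - (1-p)^L)^(2*m)) ≤
      μ {ω | (Set.Icc (-(m:ℤ)) (1+(m:ℤ)) ×ˢ Set.Icc (0:ℤ) ((L:ℤ)-1)) ⊆
          ggClosure ((({0,1} : Set ℤ) ×ˢ Set.Icc (0:ℤ) ((L:ℤ)-1)) ∪ occupied ω)} := by
  let column (c : ℤ) : Finset Site := {c} ×ˢ Finset.Icc 0 ((L:ℤ) - 1)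
  let seeds : Finset ℤ := Finset.Icc (-(m:ℤ)) (1 + m) \ {0, 1}
  have hcard : seeds.card = 2 * m := by
    have hsub : ({0, 1} : Finset ℤ) ⊆ Finset.Icc (-(m:ℤ)) (1 + m) := fun c => by
      simp only [Finset.mem_insert, Finset.mem_singleton, Finset.mem_Icc]; omega
    rw [Finset.card_sdiff_of_subset hsub, Int.card_Icc, Finset.card_pair zero_ne_one]
    omega
  have hdisj : (seeds : Set ℤ).PairwiseDisjoint column := fun c _ d _ hcd =>
    Finset.disjoint_product.mpr (Or.inl (Finset.disjoint_singleton.mpr hcd))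
  calc ENNReal.ofReal ((1 - (1-p)^L)^(2*m))
      = ∏ c ∈ seeds, μ {ω | ∃ x ∈ column c, ω x = true} := by
        simp only [hμ.measure_exists_eq_true hp.1.le hp.2.le, Finset.prod_const, hcard, column,
          Finset.card_product, Finset.card_singleton, one_mul, Int.card_Icc, sub_add_cancel,
          sub_zero, Int.toNat_natCast]
        exact ENNReal.ofReal_pow
          (sub_nonneg.mpr (pow_le_one₀ (by linarith [hp.2]) (by linarith [hp.1]))) _
    _ = μ (⋂ c ∈ seeds, {ω | ∃ x ∈ column c, ω x = true}) :=
        (hμ.2.1.measure_biInter_exists_eq_true (fun x => measurable_pi_apply x) _ _ hdisj).symm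
    _ ≤ _ := measure_mono fun ω hω => by
        refine widened_rectangle_subset_ggClosure m subset_union_left fun c hc => ?_
        obtain ⟨⟨c', y⟩, hx, hωx⟩ := mem_iInter₂.mp hω c (by simpa [seeds] using hc)
        obtain ⟨hc', hy⟩ := Finset.mem_product.mp hx
        obtain rfl : c' = c := Finset.mem_singleton.mp hc'
        exact ⟨y, Finset.mem_Icc.mp hy, Or.inr hωx⟩

theorem gg_droplet_widening (p : ℝ) (hp : p ∈ Set.Ioo (0:ℝ) 1)
    (L m : ℕ) (hL : 1 ≤ L) (hm : 1 ≤ m)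
    (μ : Measure Config) (hμ : IsBernoulli p μ) :
    ENNReal.ofReal ((1 - (1-p)^L)^(2*m)) ≤
      μ {ω | (Set.Icc (-(m:ℤ)) (1+(m:ℤ)) ×ˢ Set.Icc (0:ℤ) ((L:ℤ)-1)) ⊆
          ggClosure ((({0,1} : Set ℤ) ×ˢ Set.Icc (0:ℤ) ((L:ℤ)-1)) ∪ occupied ω)} :=
  gg_droplet_widening_general p hp L m μ hμ
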